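/- Suppose Assumption (Ass) holds and that sup_{z ∈ ρ(H₀)} ‖K(z)‖ ≤ c for some c < 1. Then σ(H_V) ⊂ σ(H₀), σ_p(H_V) ∪ σ_r(H_V) ⊂ σ_p(H₀), and σ_c(H₀) ⊂ σ_c(H_V). In particular, if σ(H₀) = σ_c(H₀) then σ(H_V) = σ_c(H_V) = σ(H₀). -/

import Mathlib

open ContinuousLinearMap

noncomputable section

/-- An abstract encoding of the setting of Assumption 1.1 of
Hansmann–Krejčiřík.  The self-adjoint operator `H₀` in the Hilbert space `H`
is encoded through the *bounded* operators
`S = G₀^{-1/2} = (|H₀|+1)^{-1/2}` and `T = H₀ G₀^{-1}`,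
and the relatively bounded factors `A, B` of the perturbation `V = B^*A`
through the bounded operators `a = A G₀^{-1/2}` and `b = B G₀^{-1/2}`. -/
structure BSSetup (H H' : Type*) [NormedAddCommGroup H] [InnerProductSpace ℂ H]
    [CompleteSpace H] [NormedAddCommGroup H'] [InnerProductSpace ℂ H'] [CompleteSpace H'] where
  /-- `S` represents `G₀^{-1/2} = (|H₀|+1)^{-1/2}`. -/
  S : H →L[ℂ] H
  /-- `T` represents `H₀ G₀^{-1}`. -/
  T : H →L[ℂ] H
  /-- `a` represents the bounded operator `A G₀^{-1/2}`. -/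
  a : H →L[ℂ] H'
  /-- `b` represents the bounded operator `B G₀^{-1/2}`. -/
  b : H →L[ℂ] H'
  S_sa : IsSelfAdjoint S
  T_sa : IsSelfAdjoint T
  S_pos : ∀ x : H, 0 ≤ (inner ℂ x (S x) : ℂ).re
  S_inj : Function.Injective S
  S_dense : DenseRange S
  S_norm : ‖S‖ ≤ 1
  comm : S * T = T * S
  /-- `|H₀| G₀^{-1} = 1 - S²`, i.e. `T² = (H₀ G₀^{-1})² = (1-S²)²`. -/
  T_sq : T * T = (1 - S * S) * (1 - S * S)

namespace BSSetup

variable {H H' : Type*} [NormedAddCommGroup H] [InnerProductSpace ℂ H]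
  [CompleteSpace H] [NormedAddCommGroup H'] [InnerProductSpace ℂ H'] [CompleteSpace H']
  (P : BSSetup H H')

/-- The bounded operator `(H₀ - z) G₀^{-1}`. -/
def Tz (z : ℂ) : H →L[ℂ] H := P.T - z • (P.S * P.S)

/-- The resolvent set `ρ(H₀)`:  `z ∈ ρ(H₀)` iff `(H₀ - z)G₀^{-1}` is boundedly
invertible. -/
def res : Set ℂ := {z | IsUnit (P.Tz z)}

/-- The spectrum `σ(H₀)`. -/
def spec : Set ℂ := {z | ¬ IsUnit (P.Tz z)}

/-- The point spectrum `σ_p(H₀)`: eigenvectors of `H₀` are of the form `ψ = G₀^{-1} x`. -/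
def pointSpec : Set ℂ := {z | ∃ x : H, x ≠ 0 ∧ P.Tz z x = 0}

/-- The continuous spectrum `σ_c(H₀)`: `z ∈ σ(H₀)`, `z` is not an eigenvalue and
the range of `H₀ - z` (which equals the range of `(H₀-z)G₀^{-1}`) is dense. -/
def contSpec : Set ℂ :=
  {z | ¬ IsUnit (P.Tz z) ∧ (∀ x : H, P.Tz z x = 0 → x = 0) ∧ DenseRange (P.Tz z)}

/-- The Birman–Schwinger operator
`K(z) = [A G₀^{-1/2}][G₀(H₀ - z)^{-1}][B G₀^{-1/2}]^*`. -/
def K (z : ℂ) : H' →L[ℂ] H' :=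
  P.a ∘L (Ring.inverse (P.Tz z)) ∘L (ContinuousLinearMap.adjoint P.b)

/-- `W = H₀ G₀^{-1} + [B G₀^{-1/2}]^* A G₀^{-1/2}`; the pseudo-Friedrichs extension is
`H_V = G₀^{1/2} W G₀^{1/2}`, i.e. `ψ = S u ∈ Dom(H_V)` iff `W u ∈ Ran S`, and then
`H_V (S u) = y` where `W u = S y`. -/
def W : H →L[ℂ] H := P.T + (ContinuousLinearMap.adjoint P.b) ∘L P.a

/-- The bounded operator `(H₀ - z)G₀^{-1} + [B G₀^{-1/2}]^* A G₀^{-1/2}`,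
representing `(H_V - z)` conjugated with `G₀^{1/2}`. -/
def Wz (z : ℂ) : H →L[ℂ] H := P.W - z • (P.S * P.S)

/-- Assumption 1.1 (Ass): there is `λ₀ ∈ ρ(H₀)` with `-1 ∉ σ(K(λ₀))`. -/
def Ass : Prop := ∃ μ : ℂ, IsUnit (P.Tz μ) ∧ (-1 : ℂ) ∉ spectrum ℂ (P.K μ)

end BSSetup

namespace BSSetup

variable {H H' : Type*} [NormedAddCommGroup H] [InnerProductSpace ℂ H]
  [CompleteSpace H] [NormedAddCommGroup H'] [InnerProductSpace ℂ H'] [CompleteSpace H']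
  (P : BSSetup H H')

/-- `W^* = H₀ G₀^{-1} + [A G₀^{-1/2}]^* B G₀^{-1/2}`, representing the adjoint `H_V^*`. -/
def Wstar : H →L[ℂ] H := P.T + (ContinuousLinearMap.adjoint P.a) ∘L P.b

/-- The spectrum `σ(H_V)`. -/
def specV : Set ℂ := {z | ¬ IsUnit (P.Wz z)}

/-- The point spectrum `σ_p(H_V)`. -/
def pointSpecV : Set ℂ := {z | ∃ u : H, u ≠ 0 ∧ P.Wz z u = 0}

/-- The residual spectrum `σ_r(H_V)`:  `z ∉ σ_p(H_V)` and `z̄ ∈ σ_p(H_V^*)`. -/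
def resSpecV : Set ℂ :=
  {z | (∀ u : H, P.Wz z u = 0 → u = 0) ∧
    ∃ u : H, u ≠ 0 ∧ (P.Wstar - (starRingEnd ℂ z) • (P.S * P.S)) u = 0}

/-- The continuous spectrum `σ_c(H_V)`: `z ∈ σ(H_V)`, `z` is not an eigenvalue of
`H_V`, and the range `{y | ∃ u, S y = (W - z S²) u}` of `H_V - z` is dense. -/
def contSpecV : Set ℂ :=
  {z | ¬ IsUnit (P.Wz z) ∧ (∀ u : H, P.Wz z u = 0 → u = 0) ∧
    Dense {y : H | ∃ u : H, P.S y = P.Wz z u}}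

end BSSetup

/-!
Write `R₀(w) = (Tz w)⁻¹`, so that `K(w) = a R₀(w) b^*` and
`Wz w = Tz w + b^* a = (1 + b^* a R₀(w)) Tz w`. If `‖K(w)‖ ≤ c < 1` then `1 + K(w)` is invertible,
hence so is `1 + b^* a R₀(w)`: this gives `σ(H_V) ⊆ σ(H₀)`.

If `Wz z u = 0` with `z` real, then `a u = -K(z + iε) a u - iε a R₀(z + iε) S² u`. When `z` is not
an eigenvalue of `H₀`, the range of the self-adjoint `Tz z` is dense and the last term tends to `0`
as `ε → 0`; thus `(1 - c)‖a u‖ ≤ 0`, so `a u = 0` and `Tz z u = 0`. Exchanging `a` and `b` turns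
`H_V` into `H_V^*` and `K(z)` into `K(z̄)^*`, so the same argument handles the residual spectrum and
the density of the range of `H_V - z`.

Finally, if `Wz z` is invertible, the identity `R₀ = R_V + R_V b^* (1 + K) a R_V`, where
`R_V(w) = (Wz w)⁻¹`, bounds `R₀(w)` uniformly for non-real `w` near `z`, and a limit of invertible
operators with uniformly bounded inverses is invertible; so `σ_c(H₀)` does not meet `ρ(H_V)`.
-/

open Filter Topology
open scoped Ring ComplexConjugate InnerProductSpace

theorem isUnit_of_tendsto_of_norm_inverse_le {R ι : Type*} [NormedRing R] [CompleteSpace R]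
    {l : Filter ι} [l.NeBot] {f : ι → R} {x : R} {M : ℝ} (hf : Tendsto f l (𝓝 x))
    (hM : ∀ᶠ i in l, IsUnit (f i) ∧ ‖(f i)⁻¹ʳ‖ ≤ M) : IsUnit x := by
  have hnear : ∀ᶠ i in l, (|M| + 1) * ‖f i - x‖ < 1 := by
    have := (tendsto_iff_norm_sub_tendsto_zero.mp hf).const_mul (|M| + 1)
    rw [mul_zero] at this
    exact this.eventually (gt_mem_nhds one_pos)
  obtain ⟨i, ⟨hunit, hinv⟩, hi⟩ := (hM.and hnear).exists
  have hsmall : ‖(f i)⁻¹ʳ * (f i - x)‖ < 1 := calc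
    ‖(f i)⁻¹ʳ * (f i - x)‖ ≤ ‖(f i)⁻¹ʳ‖ * ‖f i - x‖ := norm_mul_le _ _
    _ ≤ (|M| + 1) * ‖f i - x‖ := by
      gcongr
      linarith [le_abs_self M]
    _ < 1 := hi
  have hx : x = f i * (1 - (f i)⁻¹ʳ * (f i - x)) := by
    rw [mul_sub, mul_one, ← mul_assoc, Ring.mul_inverse_cancel _ hunit, one_mul, sub_sub_cancel]
  rw [hx]
  exact hunit.mul (Units.oneSub _ hsmall).isUnit

theorem Commute.ringInverse_left {M₀ : Type*} [MonoidWithZero M₀] {a b : M₀} (h : Commute a b) :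
    Commute a⁻¹ʳ b := by
  by_cases ha : IsUnit a
  · obtain ⟨u, rfl⟩ := ha
    rw [Ring.inverse_unit]
    exact h.units_inv_left
  · rw [Ring.inverse_non_unit _ ha]
    exact Commute.zero_left b

section BoundedOperators

variable {𝕜 E F : Type*} [NontriviallyNormedField 𝕜] [NormedAddCommGroup E] [NormedSpace 𝕜 E]
  [NormedAddCommGroup F] [NormedSpace 𝕜 F]

theorem IsUnit.inverse_apply_apply {T : E →L[𝕜] E} (hT : IsUnit T) (x : E) : T⁻¹ʳ (T x) = x := by
  rw [← mul_apply_eq_comp, Ring.inverse_mul_cancel _ hT, one_apply_eq_self]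

theorem IsUnit.apply_inverse_apply {T : E →L[𝕜] E} (hT : IsUnit T) (y : E) : T (T⁻¹ʳ y) = y := by
  rw [← mul_apply_eq_comp, Ring.mul_inverse_cancel _ hT, one_apply_eq_self]

theorem IsUnit.apply_eq_zero_iff {T : E →L[𝕜] E} (hT : IsUnit T) {x : E} : T x = 0 ↔ x = 0 := by
  refine ⟨fun h => ?_, fun h => h ▸ map_zero T⟩
  rw [← hT.inverse_apply_apply x, h, map_zero]

theorem isUnit_one_add_comp_swap {A : E →L[𝕜] F} {B : F →L[𝕜] E}
    (h : IsUnit (1 + A ∘L B)) : IsUnit (1 + B ∘L A) := by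
  set X := (1 + A ∘L B)⁻¹ʳ
  have hXl : ∀ y, X (y + A (B y)) = y := fun y => by simpa using h.inverse_apply_apply y
  have hXr : ∀ y, X y + A (B (X y)) = y := fun y => by simpa using h.apply_inverse_apply y
  refine ⟨⟨1 + B ∘L A, 1 - B ∘L X ∘L A, ?_, ?_⟩, rfl⟩ <;> ext x
  · simp only [mul_apply_eq_comp, add_apply, sub_apply, comp_apply, one_apply_eq_self]
    have hAx : A (x - B (X (A x))) = X (A x) := by
      rw [map_sub]
      exact sub_eq_of_eq_add (hXr _).symm
    rw [hAx, sub_add_cancel]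
  · simp only [mul_apply_eq_comp, add_apply, sub_apply, comp_apply, one_apply_eq_self]
    rw [map_add, hXl, add_sub_cancel_right]

theorem isUnit_add_comp_of_isUnit_one_add {T : E →L[𝕜] E} {A : E →L[𝕜] F} {B : F →L[𝕜] E}
    (hT : IsUnit T) (h : IsUnit (1 + A ∘L T⁻¹ʳ ∘L B)) : IsUnit (T + B ∘L A) := by
  have hfactor : T + B ∘L A = (1 + B ∘L A ∘L T⁻¹ʳ) * T := by
    rw [add_mul, one_mul, mul_def, comp_assoc, comp_assoc, ← mul_def _ T,
      Ring.inverse_mul_cancel _ hT]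
    rfl
  rw [hfactor]
  exact (isUnit_one_add_comp_swap (A := A ∘L T⁻¹ʳ) h).mul hT

theorem norm_inverse_le_of_isUnit_add_comp {T : E →L[𝕜] E} {A : E →L[𝕜] F} {B : F →L[𝕜] E}
    (hT : IsUnit T) (hW : IsUnit (T + B ∘L A)) :
    ‖T⁻¹ʳ‖ ≤ ‖(T + B ∘L A)⁻¹ʳ‖ +
      ‖(T + B ∘L A)⁻¹ʳ‖ * (‖B‖ * (‖1 + A ∘L T⁻¹ʳ ∘L B‖ * (‖A‖ * ‖(T + B ∘L A)⁻¹ʳ‖))) := by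
  set R := (T + B ∘L A)⁻¹ʳ
  set K := 1 + A ∘L T⁻¹ʳ ∘L B
  have hRW : ∀ x, R (T x + B (A x)) = x := fun x => by simpa using hW.inverse_apply_apply x
  have hWR : ∀ y, T (R y) + B (A (R y)) = y := fun y => by simpa using hW.apply_inverse_apply y
  have hA : ∀ y, A (T⁻¹ʳ y) = K (A (R y)) := fun y => by
    simp only [K, add_apply, one_apply_eq_self, comp_apply]
    conv_lhs => rw [← hWR y, map_add, map_add, hT.inverse_apply_apply]
  have hresolvent : T⁻¹ʳ = R + R ∘L B ∘L K ∘L A ∘L R := by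
    ext y
    simp only [add_apply, comp_apply, ← hA]
    conv_lhs => rw [← hRW (T⁻¹ʳ y), hT.apply_inverse_apply]
    rw [map_add]
  calc ‖T⁻¹ʳ‖ = ‖R + R ∘L B ∘L K ∘L A ∘L R‖ := congrArg norm hresolvent
    _ ≤ ‖R‖ + ‖R ∘L B ∘L K ∘L A ∘L R‖ := norm_add_le _ _
    _ ≤ ‖R‖ + ‖R‖ * (‖B‖ * (‖K‖ * (‖A‖ * ‖R‖))) := by
      gcongr
      calc _ ≤ ‖R‖ * ‖B ∘L K ∘L A ∘L R‖ := opNorm_comp_le _ _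
        _ ≤ ‖R‖ * (‖B‖ * ‖K ∘L A ∘L R‖) := by gcongr; exact opNorm_comp_le _ _
        _ ≤ ‖R‖ * (‖B‖ * (‖K‖ * ‖A ∘L R‖)) := by gcongr; exact opNorm_comp_le _ _
        _ ≤ ‖R‖ * (‖B‖ * (‖K‖ * (‖A‖ * ‖R‖))) := by gcongr; exact opNorm_comp_le _ _

end BoundedOperators

section Hilbert

variable {𝕜 E : Type*} [RCLike 𝕜] [NormedAddCommGroup E] [InnerProductSpace 𝕜 E] [CompleteSpace E]

theorem IsSelfAdjoint.inner_apply_left {A : E →L[𝕜] E} (hA : IsSelfAdjoint A) (x y : E) :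
    ⟪A x, y⟫_𝕜 = ⟪x, A y⟫_𝕜 :=
  hA.isSymmetric x y

theorem IsSelfAdjoint.denseRange_of_injective {A : E →L[𝕜] E} (hA : IsSelfAdjoint A)
    (hinj : Function.Injective A) : DenseRange A := by
  have : (LinearMap.range (A : E →ₗ[𝕜] E)).topologicalClosure = ⊤ := by
    rw [Submodule.topologicalClosure_eq_top_iff, orthogonal_range, hA.adjoint_eq,
      LinearMap.ker_eq_bot]
    exact hinj
  rwa [← Submodule.dense_iff_topologicalClosure_eq_top, LinearMap.coe_range] at this

theorem isUnit_of_norm_le_mul_norm_apply {T : E →L[𝕜] E} {C : ℝ}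
    (hT : ∀ x, ‖x‖ ≤ C * ‖T x‖) (hT' : ∀ x, ‖x‖ ≤ C * ‖adjoint T x‖) : IsUnit T := by
  have antilipschitz {U : E →L[𝕜] E} (hU : ∀ x, ‖x‖ ≤ C * ‖U x‖) :
      AntilipschitzWith C.toNNReal U :=
    U.antilipschitz_of_bound fun x => (hU x).trans (by gcongr; exact Real.le_coe_toNNReal C)
  rw [isUnit_iff_bijective, bijective_iff_dense_range_and_antilipschitz,
    Submodule.topologicalClosure_eq_top_iff, orthogonal_range, LinearMap.ker_eq_bot]
  exact ⟨(antilipschitz hT').injective, _, antilipschitz hT⟩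

theorem norm_apply_eq_of_adjoint_comp_self_eq {A B : E →L[𝕜] E}
    (h : adjoint A ∘L A = adjoint B ∘L B) (x : E) : ‖A x‖ = ‖B x‖ := by
  rw [← sq_eq_sq₀ (norm_nonneg _) (norm_nonneg _), apply_norm_sq_eq_inner_adjoint_left,
    apply_norm_sq_eq_inner_adjoint_left, h]

theorem exists_eq_apply_and_adjoint_apply_eq_zero {S M : E →L[𝕜] E} (hS : IsSelfAdjoint S)
    {μ : 𝕜} (hN : IsUnit (M + μ • (S * S))) {ψ : E}
    (hψ : ∀ y u, S y = M u → ⟪y, ψ⟫_𝕜 = 0) : ∃ φ, ψ = S φ ∧ adjoint M φ = 0 := by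
  set R := (M + μ • (S * S))⁻¹ʳ
  have hψ_eq : ψ = S (star μ • adjoint R (S ψ)) := by
    refine ext_inner_left 𝕜 fun x => ?_
    have hMR : S (x - μ • S (R (S x))) = M (R (S x)) := by
      have := hN.apply_inverse_apply (S x)
      simp only [add_apply, smul_apply, mul_apply_eq_comp] at this
      rw [map_sub, map_smul, sub_eq_iff_eq_add]
      exact this.symm
    have := hψ _ _ hMR
    rw [inner_sub_left, inner_smul_left, sub_eq_zero] at this
    rw [this, map_smul, inner_smul_right, hS.inner_apply_left, ← adjoint_inner_right,
      hS.inner_apply_left]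
    rfl
  refine ⟨_, hψ_eq, ?_⟩
  have hN' : adjoint (M + μ • (S * S)) = adjoint M + star μ • (S * S) := by
    simp only [← star_eq_adjoint, star_add, star_smul, star_mul, hS.star_eq]
  have hNR : adjoint (M + μ • (S * S)) (adjoint R (S ψ)) = S ψ := by
    have : adjoint (M + μ • (S * S)) * adjoint R = 1 := by
      rw [← star_eq_adjoint, ← star_eq_adjoint, ← star_mul, Ring.inverse_mul_cancel _ hN, star_one]
    simpa using congr($this (S ψ))
  have hSφ : star μ • S (S (adjoint R (S ψ))) = S ψ := by
    conv_rhs => rw [hψ_eq]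
    simp only [map_smul]
  rw [hN', add_apply, smul_apply, mul_apply_eq_comp, hSφ, add_eq_right] at hNR
  rw [map_smul, hNR, smul_zero]

end Hilbert

section ComplexHilbert

open Complex

variable {E : Type*} [NormedAddCommGroup E] [InnerProductSpace ℂ E] [CompleteSpace E]
  {N P : E →L[ℂ] E}

theorem norm_sub_smul_I_apply_sq (hN : IsSelfAdjoint N) (hP : IsSelfAdjoint P)
    (hNP : Commute N P) (ε : ℝ) (x : E) :
    ‖(N - ((ε : ℂ) * I) • P) x‖ ^ 2 = ‖N x‖ ^ 2 + ε ^ 2 * ‖P x‖ ^ 2 := by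
  have hreal : conj ⟪N x, P x⟫_ℂ = ⟪N x, P x⟫_ℂ := by
    rw [inner_conj_symm, hP.inner_apply_left, ← mul_apply_eq_comp, ← hNP.eq, mul_apply_eq_comp,
      ← hN.inner_apply_left]
  rw [conj_eq_iff_im] at hreal
  rw [sub_apply, smul_apply, @norm_sub_sq ℂ, inner_smul_right, norm_smul]
  simp [hreal, mul_pow]

theorem norm_apply_inverse_sub_smul_I_sq_le (hN : IsSelfAdjoint N) (hP : IsSelfAdjoint P)
    (hNP : Commute N P) (ε : ℝ) (y : E) :
    ‖N ((N - ((ε : ℂ) * I) • P)⁻¹ʳ y)‖ ^ 2 + ε ^ 2 * ‖P ((N - ((ε : ℂ) * I) • P)⁻¹ʳ y)‖ ^ 2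
      ≤ ‖y‖ ^ 2 := by
  by_cases h : IsUnit (N - ((ε : ℂ) * I) • P)
  · rw [← norm_sub_smul_I_apply_sq hN hP hNP, h.apply_inverse_apply]
  · rw [Ring.inverse_non_unit _ h]
    simp

theorem tendsto_smul_I_inverse_sub_smul_I_apply (hN : IsSelfAdjoint N) (hP : IsSelfAdjoint P)
    (hNP : Commute N P) (hdense : DenseRange N) (u : E) :
    Tendsto (fun ε : ℝ => ((ε : ℂ) * I) • (N - ((ε : ℂ) * I) • P)⁻¹ʳ (P u)) (𝓝 0) (𝓝 0) := by
  set R := fun ε : ℝ => (N - ((ε : ℂ) * I) • P)⁻¹ʳ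
  have hnorm : ∀ ε : ℝ, ‖(ε : ℂ) * I‖ = |ε| := by simp
  have hRP : ∀ ε w, R ε (P w) = P (R ε w) := fun ε w =>
    congr($(((hNP.symm.sub_right ((Commute.refl P).smul_right _)).symm.ringInverse_left).eq) w)
  have hRN : ∀ ε w, R ε (N w) = N (R ε w) := fun ε w =>
    congr($(((Commute.refl N).sub_left (hNP.smul_right _).symm).ringInverse_left.eq) w)
  have hbound : ∀ ε w, ‖N (R ε w)‖ ≤ ‖w‖ ∧ ‖((ε : ℂ) * I) • P (R ε w)‖ ≤ ‖w‖ := fun ε w => by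
    have := norm_apply_inverse_sub_smul_I_sq_le hN hP hNP ε w
    rw [norm_smul, hnorm]
    constructor <;> refine le_of_sq_le_sq ?_ (norm_nonneg w) <;> nlinarith [sq_abs ε]
  rw [Metric.tendsto_nhds]
  intro δ hδ
  obtain ⟨v, hv⟩ := hdense.exists_dist_lt u (half_pos hδ)
  have hsmall : ∀ᶠ ε : ℝ in 𝓝 0, |ε| * (‖P‖ * ‖v‖) < δ / 2 := by
    have : Tendsto (fun ε : ℝ => |ε| * (‖P‖ * ‖v‖)) (𝓝 0) (𝓝 0) := by
      simpa using (continuous_abs.tendsto (0 : ℝ)).mul_const (‖P‖ * ‖v‖)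
    exact this.eventually (gt_mem_nhds (half_pos hδ))
  filter_upwards [hsmall] with ε hε
  have hsplit : P u = P (u - N v) + P (N v) := by rw [← map_add, sub_add_cancel]
  rw [dist_zero_right, hsplit, map_add, hRP, hRP, hRN, smul_add]
  calc _ ≤ ‖((ε : ℂ) * I) • P (R ε (u - N v))‖ + ‖((ε : ℂ) * I) • P (N (R ε v))‖ :=
        norm_add_le _ _
    _ ≤ ‖u - N v‖ + |ε| * (‖P‖ * ‖v‖) := by
        gcongr
        · exact (hbound ε _).2
        · rw [norm_smul, hnorm]
          gcongr
          exact (P.le_opNorm _).trans (by gcongr; exact (hbound ε v).1)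
    _ < δ / 2 + δ / 2 := by
        gcongr
        rwa [← dist_eq_norm]
    _ = δ := add_halves δ

end ComplexHilbert

namespace BSSetup

open Complex

variable {H H' : Type*} [NormedAddCommGroup H] [InnerProductSpace ℂ H]
  [CompleteSpace H] [NormedAddCommGroup H'] [InnerProductSpace ℂ H'] [CompleteSpace H']
  (P : BSSetup H H')

theorem isSelfAdjoint_S_mul_S : IsSelfAdjoint (P.S * P.S) := by
  simpa only [P.S_sa.star_eq] using IsSelfAdjoint.star_mul_self P.S

theorem adjoint_Tz (z : ℂ) : adjoint (P.Tz z) = P.Tz (conj z) := by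
  rw [Tz, ← star_eq_adjoint, star_sub, star_smul, P.T_sa.star_eq, P.isSelfAdjoint_S_mul_S.star_eq]
  rfl

theorem isSelfAdjoint_Tz {z : ℂ} (hz : z.im = 0) : IsSelfAdjoint (P.Tz z) := by
  rw [isSelfAdjoint_iff', adjoint_Tz, conj_eq_iff_im.mpr hz]

theorem commute_Tz_S_mul_S (z : ℂ) : Commute (P.Tz z) (P.S * P.S) :=
  ((show Commute P.S P.T from P.comm).mul_left P.comm).symm.sub_left
    ((Commute.refl _).smul_left z)

theorem Tz_add (z w : ℂ) : P.Tz (z + w) = P.Tz z - w • (P.S * P.S) := by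
  rw [Tz, Tz, add_smul, sub_add_eq_sub_sub]

theorem Wz_add (z w : ℂ) : P.Wz (z + w) = P.Wz z - w • (P.S * P.S) := by
  rw [Wz, Wz, add_smul, sub_add_eq_sub_sub]

theorem Wz_eq_Tz_add (z : ℂ) : P.Wz z = P.Tz z + adjoint P.b ∘L P.a := by
  rw [Wz, W, Tz, sub_add_eq_add_sub]

theorem continuous_Tz : Continuous P.Tz :=
  continuous_const.sub (continuous_id.smul continuous_const)

theorem continuous_Wz : Continuous P.Wz :=
  continuous_const.sub (continuous_id.smul continuous_const)

theorem norm_T_apply (x : H) : ‖P.T x‖ = ‖(1 - P.S * P.S) x‖ := by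
  refine norm_apply_eq_of_adjoint_comp_self_eq ?_ x
  have h1 : IsSelfAdjoint (1 - P.S * P.S) := (IsSelfAdjoint.one _).sub P.isSelfAdjoint_S_mul_S
  rw [P.T_sa.adjoint_eq, h1.adjoint_eq, ← mul_def, ← mul_def, P.T_sq]

theorem norm_S_mul_S_apply_le (x : H) : ‖(P.S * P.S) x‖ ≤ ‖P.S x‖ :=
  (P.S.le_opNorm _).trans (mul_le_of_le_one_left (norm_nonneg _) P.S_norm)

theorem norm_le_norm_Tz_apply_add (w : ℂ) (x : H) :
    ‖x‖ ≤ ‖P.Tz w x‖ + (1 + ‖w‖) * ‖P.S x‖ := by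
  have hT : ‖P.T x‖ ≤ ‖P.Tz w x‖ + ‖w‖ * ‖P.S x‖ := by
    have : P.T x = P.Tz w x + w • (P.S * P.S) x := by simp [Tz]
    rw [this]
    refine (norm_add_le _ _).trans ?_
    rw [norm_smul]
    gcongr
    exact P.norm_S_mul_S_apply_le x
  calc ‖x‖ = ‖(1 - P.S * P.S) x + (P.S * P.S) x‖ := by simp
    _ ≤ ‖(1 - P.S * P.S) x‖ + ‖(P.S * P.S) x‖ := norm_add_le _ _
    _ ≤ _ := by rw [← norm_T_apply]; linarith [P.norm_S_mul_S_apply_le x]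

theorem im_inner_Tz_apply (w : ℂ) (x : H) :
    (⟪x, P.Tz w x⟫_ℂ).im = -(w.im * ‖P.S x‖ ^ 2) := by
  have hT : (⟪x, P.T x⟫_ℂ).im = 0 := by
    rw [← conj_eq_iff_im, inner_conj_symm, P.T_sa.inner_apply_left]
  have hS : ⟪x, (P.S * P.S) x⟫_ℂ = ((‖P.S x‖ ^ 2 : ℝ) : ℂ) := by
    rw [mul_apply_eq_comp, ← P.S_sa.inner_apply_left, inner_self_eq_norm_sq_to_K]
    push_cast
    rfl
  rw [Tz, sub_apply, smul_apply, inner_sub_right, inner_smul_right, hS, sub_im, hT, mul_im,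
    ofReal_re, ofReal_im]
  ring

theorem mul_norm_le_mul_norm_Tz_apply (w : ℂ) (x : H) :
    |w.im| * ‖x‖ ≤ (2 * |w.im| + (1 + ‖w‖) ^ 2) * ‖P.Tz w x‖ := by
  have hlin := P.norm_le_norm_Tz_apply_add w x
  have hquad : |w.im| * ‖P.S x‖ ^ 2 ≤ ‖x‖ * ‖P.Tz w x‖ := by
    calc |w.im| * ‖P.S x‖ ^ 2 = |(⟪x, P.Tz w x⟫_ℂ).im| := by
          rw [im_inner_Tz_apply, abs_neg, abs_mul, abs_of_nonneg (sq_nonneg ‖P.S x‖)]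
      _ ≤ ‖x‖ * ‖P.Tz w x‖ := (abs_im_le_norm _).trans (norm_inner_le_norm _ _)
  rcases le_or_gt ‖x‖ ‖P.Tz w x‖ with hle | hlt
  · nlinarith [abs_nonneg w.im, norm_nonneg (P.Tz w x), sq_nonneg (1 + ‖w‖)]
  · have hdiff : (‖x‖ - ‖P.Tz w x‖) ^ 2 ≤ (1 + ‖w‖) ^ 2 * ‖P.S x‖ ^ 2 := by
      rw [← mul_pow]
      gcongr
      linarith
    have hx : 0 < ‖x‖ := (norm_nonneg _).trans_lt hlt
    refine le_of_mul_le_mul_left ?_ hx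
    nlinarith [abs_nonneg w.im, sq_nonneg ‖P.Tz w x‖, sq_nonneg (1 + ‖w‖)]

theorem isUnit_Tz {w : ℂ} (hw : w.im ≠ 0) : IsUnit (P.Tz w) := by
  have hm : 0 < |w.im| := abs_pos.mpr hw
  have hbound (v : ℂ) (hv : |v.im| = |w.im|) (hnorm : ‖v‖ = ‖w‖) (x : H) :
      ‖x‖ ≤ (2 * |w.im| + (1 + ‖w‖) ^ 2) / |w.im| * ‖P.Tz v x‖ := by
    rw [div_mul_eq_mul_div, le_div_iff₀ hm, mul_comm]
    simpa only [hv, hnorm] using P.mul_norm_le_mul_norm_Tz_apply v x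
  refine isUnit_of_norm_le_mul_norm_apply (hbound w rfl rfl) fun x => ?_
  rw [adjoint_Tz]
  exact hbound _ (by rw [conj_im, abs_neg]) (RCLike.norm_conj w) x

theorem im_eq_zero_of_mem_pointSpec {z : ℂ} (hz : z ∈ P.pointSpec) : z.im = 0 := by
  obtain ⟨x, hx, hTx⟩ := hz
  by_contra him
  exact hx ((P.isUnit_Tz him).apply_eq_zero_iff.mp hTx)

theorem injective_Tz {z : ℂ} (hz : z ∉ P.pointSpec) : Function.Injective (P.Tz z) := by
  refine (injective_iff_map_eq_zero _).mpr fun x hx => ?_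
  by_contra hx0
  exact hz ⟨x, hx0, hx⟩

theorem isUnit_Wz {z : ℂ} (hT : IsUnit (P.Tz z)) (hK : ‖P.K z‖ < 1) : IsUnit (P.Wz z) := by
  rw [Wz_eq_Tz_add]
  refine isUnit_add_comp_of_isUnit_one_add hT ?_
  rw [← sub_neg_eq_add]
  exact (Units.oneSub _ (by rwa [norm_neg])).isUnit

theorem isUnit_Wz_of_im_ne_zero {c : ℝ} (hc : c < 1) (hK : ∀ z, IsUnit (P.Tz z) → ‖P.K z‖ ≤ c)
    {z : ℂ} (hz : z.im ≠ 0) : IsUnit (P.Wz z) :=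
  P.isUnit_Wz (P.isUnit_Tz hz) ((hK _ (P.isUnit_Tz hz)).trans_lt hc)

theorem specV_subset_spec {c : ℝ} (hc : c < 1) (hK : ∀ z, IsUnit (P.Tz z) → ‖P.K z‖ ≤ c) :
    P.specV ⊆ P.spec :=
  fun z hz hT => hz (P.isUnit_Wz hT ((hK z hT).trans_lt hc))

theorem a_apply_eq {z w : ℂ} {u : H} (hWu : P.Wz z u = 0) (hw : IsUnit (P.Tz w)) :
    P.a u = (z - w) • P.a ((P.Tz w)⁻¹ʳ ((P.S * P.S) u)) - P.K w (P.a u) := by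
  have hTw : P.Tz w u = (z - w) • (P.S * P.S) u - adjoint P.b (P.a u) := by
    rw [Wz_eq_Tz_add, add_apply, comp_apply, add_eq_zero_iff_eq_neg] at hWu
    have hTzw : P.Tz w = P.Tz z - (w - z) • (P.S * P.S) := by rw [← Tz_add, add_sub_cancel]
    rw [hTzw, sub_apply, smul_apply, hWu]
    module
  conv_lhs => rw [← hw.inverse_apply_apply u, hTw]
  rw [map_sub, map_smul, map_sub, map_smul]
  rfl

theorem a_apply_eq_zero {c : ℝ} (hc : c < 1) (hK : ∀ z, IsUnit (P.Tz z) → ‖P.K z‖ ≤ c)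
    {z : ℂ} (hz : z.im = 0) (hzp : z ∉ P.pointSpec) {u : H} (hWu : P.Wz z u = 0) :
    P.a u = 0 := by
  set f := fun ε : ℝ => ((ε : ℂ) * I) • (P.Tz z - ((ε : ℂ) * I) • (P.S * P.S))⁻¹ʳ ((P.S * P.S) u)
  have hf : Tendsto f (𝓝[≠] 0) (𝓝 0) :=
    (tendsto_smul_I_inverse_sub_smul_I_apply (P.isSelfAdjoint_Tz hz) P.isSelfAdjoint_S_mul_S
      (P.commute_Tz_S_mul_S z) ((P.isSelfAdjoint_Tz hz).denseRange_of_injective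
        (P.injective_Tz hzp)) u).mono_left nhdsWithin_le_nhds
  have hbound : ∀ᶠ ε in 𝓝[≠] (0 : ℝ), (1 - c) * ‖P.a u‖ ≤ ‖P.a‖ * ‖f ε‖ := by
    filter_upwards [self_mem_nhdsWithin] with ε hε
    have hw : IsUnit (P.Tz (z + ε * I)) := P.isUnit_Tz (by simpa [hz] using hε)
    have key := P.a_apply_eq hWu hw
    rw [Tz_add, sub_add_cancel_left, neg_smul] at key
    have : ‖P.a u‖ ≤ ‖P.a‖ * ‖f ε‖ + c * ‖P.a u‖ := calc
      ‖P.a u‖ = ‖-P.a (f ε) - P.K (z + ε * I) (P.a u)‖ := by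
          rw [map_smul]
          exact congrArg norm key
      _ ≤ ‖P.a (f ε)‖ + ‖P.K (z + ε * I) (P.a u)‖ := by
          rw [← norm_neg (P.a (f ε))]
          exact norm_sub_le _ _
      _ ≤ ‖P.a‖ * ‖f ε‖ + c * ‖P.a u‖ := by
          gcongr
          · exact P.a.le_opNorm _
          · exact (P.K _).le_of_opNorm_le (hK _ hw) _
    linarith
  have hlim := ge_of_tendsto (hf.norm.const_mul ‖P.a‖) hbound
  rw [norm_zero, mul_zero] at hlim
  exact norm_le_zero_iff.mp (nonpos_of_mul_nonpos_right hlim (by linarith))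

theorem pointSpecV_subset_pointSpec {c : ℝ} (hc : c < 1)
    (hK : ∀ z, IsUnit (P.Tz z) → ‖P.K z‖ ≤ c) : P.pointSpecV ⊆ P.pointSpec := by
  rintro z ⟨u, hu, hWu⟩
  by_contra hzp
  have hz : z.im = 0 := by
    by_contra hz
    exact hu ((P.isUnit_Wz_of_im_ne_zero hc hK hz).apply_eq_zero_iff.mp hWu)
  have hau := P.a_apply_eq_zero hc hK hz hzp hWu
  have hTu : P.Tz z u = 0 := by
    rwa [Wz_eq_Tz_add, add_apply, comp_apply, hau, map_zero, add_zero] at hWu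
  exact hu (P.injective_Tz hzp (hTu.trans (map_zero _).symm))

def swap : BSSetup H H' := { P with a := P.b, b := P.a }

theorem swap_Wz_conj (z : ℂ) : P.swap.Wz (conj z) = adjoint (P.Wz z) := by
  rw [Wz, Wz, W, W, ← star_eq_adjoint, star_sub, star_add, star_smul, star_eq_adjoint (_ ∘L _),
    adjoint_comp, adjoint_adjoint, P.T_sa.star_eq, P.isSelfAdjoint_S_mul_S.star_eq]
  rfl

theorem swap_K (z : ℂ) : P.swap.K z = adjoint (P.K (conj z)) := by
  rw [K, K, adjoint_comp, adjoint_comp, adjoint_adjoint, ← star_eq_adjoint (Ring.inverse _),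
    ← Ring.inverse_star, star_eq_adjoint, adjoint_Tz, conj_conj, comp_assoc]
  rfl

theorem norm_swap_K_le {c : ℝ} (hK : ∀ z, IsUnit (P.Tz z) → ‖P.K z‖ ≤ c) (z : ℂ)
    (hz : IsUnit (P.swap.Tz z)) : ‖P.swap.K z‖ ≤ c := by
  rw [swap_K, LinearIsometryEquiv.norm_map]
  refine hK _ ?_
  rw [← conj_conj z, ← adjoint_Tz, ← star_eq_adjoint, conj_conj]
  exact hz.star

theorem mem_pointSpec_of_adjoint_Wz_apply_eq_zero {c : ℝ} (hc : c < 1)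
    (hK : ∀ z, IsUnit (P.Tz z) → ‖P.K z‖ ≤ c) {z : ℂ} {φ : H} (hφ : φ ≠ 0)
    (hWφ : adjoint (P.Wz z) φ = 0) : z ∈ P.pointSpec := by
  have hz : conj z ∈ P.pointSpec :=
    P.swap.pointSpecV_subset_pointSpec hc (P.norm_swap_K_le hK) ⟨φ, hφ, by rwa [swap_Wz_conj]⟩
  have hreal := P.im_eq_zero_of_mem_pointSpec hz
  rw [conj_im, neg_eq_zero] at hreal
  rwa [conj_eq_iff_im.mpr hreal] at hz

theorem resSpecV_subset_pointSpec {c : ℝ} (hc : c < 1)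
    (hK : ∀ z, IsUnit (P.Tz z) → ‖P.K z‖ ≤ c) : P.resSpecV ⊆ P.pointSpec := by
  rintro z ⟨-, u, hu, hWu⟩
  exact P.mem_pointSpec_of_adjoint_Wz_apply_eq_zero hc hK hu (by rw [← swap_Wz_conj]; exact hWu)

theorem dense_S_preimage_range_Wz {c : ℝ} (hc : c < 1) (hK : ∀ z, IsUnit (P.Tz z) → ‖P.K z‖ ≤ c)
    {z : ℂ} (hz : z ∉ P.pointSpec) : Dense {y : H | ∃ u, P.S y = P.Wz z u} := by
  have hD : {y : H | ∃ u, P.S y = P.Wz z u} =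
      ((LinearMap.range (P.Wz z : H →ₗ[ℂ] H)).comap (P.S : H →ₗ[ℂ] H) : Set H) := by
    ext y
    simp [eq_comm]
  rw [hD, Submodule.dense_iff_topologicalClosure_eq_top, Submodule.topologicalClosure_eq_top_iff,
    Submodule.eq_bot_iff]
  intro ψ hψ
  have hunit : IsUnit (P.Wz z + (-(I - z)) • (P.S * P.S)) := by
    rw [neg_smul, ← sub_eq_add_neg, ← Wz_add, add_sub_cancel]
    exact P.isUnit_Wz_of_im_ne_zero hc hK (by simp)
  obtain ⟨φ, rfl, hφ⟩ := exists_eq_apply_and_adjoint_apply_eq_zero P.S_sa hunit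
    fun y u h => (Submodule.mem_orthogonal _ _).mp hψ y ⟨u, h.symm⟩
  by_contra hφ0
  exact hz (P.mem_pointSpec_of_adjoint_Wz_apply_eq_zero hc hK
    (fun h => hφ0 (by rw [h, map_zero])) hφ)

theorem isUnit_Tz_of_isUnit_Wz {c : ℝ} (hK : ∀ z, IsUnit (P.Tz z) → ‖P.K z‖ ≤ c) {z : ℂ}
    (hW : IsUnit (P.Wz z)) : IsUnit (P.Tz z) := by
  have hl : (𝓝[{w : ℂ | w.im ≠ 0}] z).NeBot := by
    refine mem_closure_iff_nhdsWithin_neBot.mp ?_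
    rw [show {w : ℂ | w.im ≠ 0} = im ⁻¹' {0}ᶜ from rfl,
      ((dense_compl_singleton (0 : ℝ)).preimage isOpenMap_im).closure_eq]
    trivial
  set M := ‖(P.Wz z)⁻¹ʳ‖ + 1
  have hWnear : ∀ᶠ w in 𝓝 z, IsUnit (P.Wz w) ∧ ‖(P.Wz w)⁻¹ʳ‖ ≤ M := by
    have hunit := P.continuous_Wz.continuousAt.preimage_mem_nhds (Units.isOpen.mem_nhds hW)
    have hinv : ContinuousAt (fun w => (P.Wz w)⁻¹ʳ) z :=
      (NormedRing.inverse_continuousAt hW.unit).comp_of_eq P.continuous_Wz.continuousAt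
        hW.unit_spec.symm
    filter_upwards [hunit, hinv.norm.eventually (gt_mem_nhds (lt_add_one _))] with w h1 h2
    exact ⟨h1, h2.le⟩
  refine isUnit_of_tendsto_of_norm_inverse_le (l := 𝓝[{w : ℂ | w.im ≠ 0}] z)
    (M := M + M * (‖adjoint P.b‖ * ((1 + c) * (‖P.a‖ * M))))
    ((P.continuous_Tz.tendsto z).mono_left nhdsWithin_le_nhds) ?_
  filter_upwards [self_mem_nhdsWithin, nhdsWithin_le_nhds hWnear] with w hw ⟨hWw, hWinv⟩
  have hTw := P.isUnit_Tz hw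
  have hc : 0 ≤ 1 + c := by linarith [(norm_nonneg _).trans (hK w hTw)]
  have hK1 : ‖1 + P.K w‖ ≤ 1 + c := (norm_add_le _ _).trans (add_le_add norm_id_le (hK w hTw))
  have hR₀ := norm_inverse_le_of_isUnit_add_comp hTw (P.Wz_eq_Tz_add w ▸ hWw)
  rw [← Wz_eq_Tz_add] at hR₀
  refine ⟨hTw, hR₀.trans ?_⟩
  gcongr
  exact hK1

theorem contSpec_subset_contSpecV {c : ℝ} (hc : c < 1) (hK : ∀ z, IsUnit (P.Tz z) → ‖P.K z‖ ≤ c) :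
    P.contSpec ⊆ P.contSpecV := by
  rintro z ⟨hT, hinj, -⟩
  have hz : z ∉ P.pointSpec := fun ⟨x, hx, hTx⟩ => hx (hinj x hTx)
  refine ⟨fun hW => hT (P.isUnit_Tz_of_isUnit_Wz hK hW), fun u hWu => ?_,
    P.dense_S_preimage_range_Wz hc hK hz⟩
  by_contra hu
  exact hz (P.pointSpecV_subset_pointSpec hc hK ⟨u, hu, hWu⟩)

end BSSetup

theorem BSSetup.spectral_stability_general
    {H H' : Type*} [NormedAddCommGroup H] [InnerProductSpace ℂ H]
    [CompleteSpace H] [NormedAddCommGroup H'] [InnerProductSpace ℂ H'] [CompleteSpace H']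
    (P : BSSetup H H') (c : ℝ) (hc : c < 1)
    (hK : ∀ z : ℂ, IsUnit (P.Tz z) → ‖P.K z‖ ≤ c) :
    P.specV ⊆ P.spec ∧
    P.pointSpecV ∪ P.resSpecV ⊆ P.pointSpec ∧
    P.contSpec ⊆ P.contSpecV ∧
    (P.spec = P.contSpec → P.specV = P.contSpecV ∧ P.contSpecV = P.spec) := by
  have hspec := P.specV_subset_spec hc hK
  have hcont := P.contSpec_subset_contSpecV hc hK
  have hcontV : P.contSpecV ⊆ P.specV := fun z hz => hz.1
  refine ⟨hspec, Set.union_subset (P.pointSpecV_subset_pointSpec hc hK)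
    (P.resSpecV_subset_pointSpec hc hK), hcont, fun h => ?_⟩
  exact ⟨(hspec.trans (h.subset.trans hcont)).antisymm hcontV,
    (hcontV.trans hspec).antisymm (h.subset.trans hcont)⟩

/-- Theorem 1.6.  Under Assumption (Ass), if
`sup_{z ∈ ρ(H₀)} ‖K(z)‖ ≤ c` for some `c < 1`, then `σ(H_V) ⊆ σ(H₀)`,
`σ_p(H_V) ∪ σ_r(H_V) ⊆ σ_p(H₀)` and `σ_c(H₀) ⊆ σ_c(H_V)`.  In particular, if
`σ(H₀) = σ_c(H₀)` then `σ(H_V) = σ_c(H_V) = σ(H₀)`. -/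
theorem BSSetup.spectral_stability
    {H H' : Type*} [NormedAddCommGroup H] [InnerProductSpace ℂ H]
    [CompleteSpace H] [NormedAddCommGroup H'] [InnerProductSpace ℂ H'] [CompleteSpace H']
    (P : BSSetup H H') (hAss : P.Ass) (c : ℝ) (hc : c < 1)
    (hK : ∀ z : ℂ, IsUnit (P.Tz z) → ‖P.K z‖ ≤ c) :
    P.specV ⊆ P.spec ∧
    P.pointSpecV ∪ P.resSpecV ⊆ P.pointSpec ∧
    P.contSpec ⊆ P.contSpecV ∧
    (P.spec = P.contSpec → P.specV = P.contSpecV ∧ P.contSpecV = P.spec) :=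
  BSSetup.spectral_stability_general P c hc hK
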